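/- For every positive integer n, the number of integer pairs (x,y) with x² + 2y² = n is nonzero if and only if in the prime factorization of n every prime p ≡ 5, 7 (mod 8) occurs to an even power; equivalently, 2·∑_{d|n}(−2/d) > 0 iff ∑_{d|n}(−2/d) ≠ 0. -/

import Mathlib

/-!
The divisor sum `∑_{d ∣ n} (-2/d)` is multiplicative, and at a prime power `p ^ k` it is the
geometric sum `∑_{i ≤ k} (-2/p) ^ i` with ratio in `{0, ±1}`, hence nonnegative.

The integers `x² + 2y²` are the norms from `ℤ[√-2]`, so they form a multiplicative monoid.
If `-2 ≡ c²` mod a prime `p`, Thue's lemma gives `x ≡ c y` with `x² < p`, `0 < y² ≤ p`, so that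
`p ∣ x² + 2y² < 3p`; this makes `p` or `2p` a value, and either way `p` is one. If `-2` is not
a square mod `p`, then `p ∣ x² + 2y²` forces `p ∣ x` and `p ∣ y`, so `p` divides every value to
an even power. By the supplementary law, `-2` is a square mod `p` exactly when `p ≢ 5, 7 (mod 8)`.
-/

/-- The Kronecker symbol `(-2/d)`. -/
def chiNeg2 (d : ℕ) : ℤ :=
  if d % 8 = 1 ∨ d % 8 = 3 then 1
  else if d % 8 = 5 ∨ d % 8 = 7 then -1
  else 0

open ArithmeticFunction

theorem MulChar.neg_one_le_apply {R : Type*} [CommMonoid R] (χ : MulChar R ℤ) (a : R) :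
    -1 ≤ χ a := by
  by_cases ha : IsUnit a
  · rcases Int.isUnit_iff.1 (ha.map χ) with h | h <;> simp [h]
  · rw [χ.map_nonunit ha]; norm_num

theorem DirichletCharacter.sum_divisors_nonneg {N : ℕ} (χ : DirichletCharacter ℤ N) (n : ℕ) :
    0 ≤ ∑ d ∈ n.divisors, χ d := by
  rcases eq_or_ne n 0 with rfl | hn
  · simp
  set f : ArithmeticFunction ℤ := ↑(zeta : ArithmeticFunction ℕ) * toArithmeticFunction (χ ·)
  have hf : f.IsMultiplicative :=
    isMultiplicative_zeta.natCast.mul χ.isMultiplicative_toArithmeticFunction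
  have hf_apply : ∀ {m : ℕ}, m ≠ 0 → f m = ∑ d ∈ m.divisors, χ d := fun hm => by
    rw [coe_zeta_mul_apply]
    exact Finset.sum_congr rfl fun d hd =>
      (χ.apply_eq_toArithmeticFunction_apply (Nat.ne_of_gt (Nat.pos_of_mem_divisors hd))).symm
  rw [← hf_apply hn, hf.multiplicative_factorization _ hn]
  refine Finset.prod_nonneg fun p hp => ?_
  have hp : p.Prime := Nat.prime_of_mem_primeFactors hp
  dsimp only
  rw [hf_apply (pow_ne_zero _ hp.ne_zero), Nat.sum_divisors_prime_pow hp]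
  simp only [Nat.cast_pow, map_pow]
  refine not_lt.1 fun h => ?_
  have := ((geom_sum_neg_iff (Nat.succ_ne_zero _)).1 h).2
  linarith [χ.neg_one_le_apply p]

theorem chiNeg2_eq_χ₈' (d : ℕ) : chiNeg2 d = ZMod.χ₈' d := by
  rw [ZMod.χ₈'_nat_eq_if_mod_eight, chiNeg2]
  split_ifs <;> omega

theorem sum_divisors_chiNeg2_nonneg (n : ℕ) : 0 ≤ ∑ d ∈ n.divisors, chiNeg2 d := by
  simpa only [chiNeg2_eq_χ₈'] using DirichletCharacter.sum_divisors_nonneg ZMod.χ₈' n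

-- Thue's lemma, from Dirichlet's approximation of `c / m` with denominator at most `√m`.
theorem Int.exists_sq_lt_sq_le_dvd_sub_mul (m : ℕ) (hm : 0 < m) (c : ℤ) :
    ∃ x y : ℤ, 0 < y ∧ x ^ 2 < m ∧ y ^ 2 ≤ m ∧ (m : ℤ) ∣ x - c * y := by
  set s := m.sqrt
  have hs : 0 < s := Nat.sqrt_pos.2 hm
  obtain ⟨j, k, hk, hks, hjk⟩ := Real.exists_int_int_abs_mul_sub_le (c / m) hs
  refine ⟨k * c - j * m, k, hk, ?_, ?_, ⟨-j, by ring⟩⟩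
  · have hmR : (0 : ℝ) < m := by exact_mod_cast hm
    have hsm : (m : ℝ) < (s + 1) ^ 2 := by exact_mod_cast Nat.lt_succ_sqrt' m
    have hx : |((k * c - j * m : ℤ) : ℝ)| ≤ m / (s + 1) := by
      rw [show ((k * c - j * m : ℤ) : ℝ) = m * (k * (c / m) - j) by push_cast; field_simp,
        abs_mul, abs_of_pos hmR, div_eq_mul_one_div (m : ℝ)]
      exact mul_le_mul_of_nonneg_left hjk hmR.le
    have : ((k * c - j * m : ℤ) : ℝ) ^ 2 < m := by
      rw [← sq_abs]
      calc _ ≤ ((m : ℝ) / (s + 1)) ^ 2 := pow_le_pow_left₀ (abs_nonneg _) hx 2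
        _ < m := by
          rw [div_pow, div_lt_iff₀ (by positivity)]
          nlinarith
    exact_mod_cast this
  · have : k ^ 2 ≤ (s : ℤ) ^ 2 := pow_le_pow_left₀ hk.le (by exact_mod_cast hks) 2
    exact this.trans (by exact_mod_cast Nat.sqrt_le' m)

-- The norms from `ℤ[√-2]`; closure under products is Brahmagupta's identity.
def sqAddTwoSq : Submonoid ℤ where
  carrier := {n | ∃ x y : ℤ, x ^ 2 + 2 * y ^ 2 = n}
  one_mem' := ⟨1, 0, by ring⟩
  mul_mem' := by
    rintro _ _ ⟨x, y, rfl⟩ ⟨u, v, rfl⟩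
    exact ⟨x * u - 2 * y * v, x * v + y * u, by ring⟩

theorem sq_mem_sqAddTwoSq (a : ℤ) : a ^ 2 ∈ sqAddTwoSq := ⟨a, 0, by ring⟩

theorem ZMod.isSquare_neg_two_iff_of_prime {p : ℕ} (hp : p.Prime) :
    IsSquare (-2 : ZMod p) ↔ ¬(p % 8 = 5 ∨ p % 8 = 7) := by
  rcases eq_or_ne p 2 with rfl | hp2
  · exact iff_of_true ⟨0, by decide⟩ (by decide)
  have := Fact.mk hp
  have h2 := hp.eq_one_or_self_of_dvd 2
  rw [ZMod.exists_sq_eq_neg_two_iff hp2]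
  omega

theorem Nat.Prime.mem_sqAddTwoSq {p : ℕ} (hp : p.Prime) (h : IsSquare (-2 : ZMod p)) :
    (p : ℤ) ∈ sqAddTwoSq := by
  have := Fact.mk hp
  obtain ⟨r, hr⟩ := h
  obtain ⟨x, y, hy, hx, hyp, hxy⟩ :=
    Int.exists_sq_lt_sq_le_dvd_sub_mul p hp.pos (r.val : ℤ)
  have hdvd : (p : ℤ) ∣ x ^ 2 + 2 * y ^ 2 := by
    rw [← ZMod.intCast_zmod_eq_zero_iff_dvd] at hxy ⊢
    push_cast at hxy ⊢
    rw [ZMod.natCast_val, ZMod.cast_id', id, sub_eq_zero] at hxy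
    rw [hxy]
    linear_combination -(y : ZMod p) ^ 2 * hr
  obtain ⟨t, ht⟩ := hdvd
  have ht0 : 0 < t := by nlinarith
  have ht3 : t < 3 := by nlinarith
  -- `x ^ 2 + 2 * y ^ 2 ∈ {p, 2 * p}`, and in the second case `x` is even
  interval_cases t
  · exact ⟨x, y, by rw [ht, mul_one]⟩
  · obtain ⟨u, rfl⟩ : Even x := (Int.even_pow.1 (⟨p - y ^ 2, by linarith⟩ : Even (x ^ 2))).1
    exact ⟨y, u, by linarith⟩

theorem Int.dvd_of_dvd_sq_add_two_mul_sq {p : ℕ} [Fact p.Prime] (h : ¬IsSquare (-2 : ZMod p))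
    {x y : ℤ} (hxy : (p : ℤ) ∣ x ^ 2 + 2 * y ^ 2) : (p : ℤ) ∣ x ∧ (p : ℤ) ∣ y := by
  simp only [← ZMod.intCast_zmod_eq_zero_iff_dvd] at hxy ⊢
  push_cast at hxy
  have hy : (y : ZMod p) = 0 := by
    by_contra hy
    exact h ⟨x / y, by field_simp; linear_combination -hxy⟩
  rw [hy] at hxy
  exact ⟨pow_eq_zero_iff two_ne_zero |>.1 (by simpa using hxy), hy⟩

theorem even_factorization_of_mem_sqAddTwoSq {p : ℕ} (hp : p.Prime)
    (h : ¬IsSquare (-2 : ZMod p)) {n : ℕ} (hn : (n : ℤ) ∈ sqAddTwoSq) :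
    Even (n.factorization p) := by
  have := Fact.mk hp
  induction n using Nat.strong_induction_on with
  | _ n ih =>
  obtain ⟨x, y, hxy⟩ := hn
  by_cases hpn : p ∣ n
  swap
  · rw [Nat.factorization_eq_zero_of_not_dvd hpn]; exact Even.zero
  rcases eq_or_ne n 0 with rfl | hn0
  · simp
  obtain ⟨⟨x', rfl⟩, ⟨y', rfl⟩⟩ :=
    Int.dvd_of_dvd_sq_add_two_mul_sq h (hxy ▸ Int.natCast_dvd_natCast.2 hpn)
  obtain ⟨m, rfl⟩ : p ^ 2 ∣ n := Int.natCast_dvd_natCast.1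
    ⟨x' ^ 2 + 2 * y' ^ 2, by push_cast; linear_combination -hxy⟩
  have hm0 : m ≠ 0 := right_ne_zero_of_mul hn0
  have hm : (m : ℤ) ∈ sqAddTwoSq := ⟨x', y', by
    have : (p : ℤ) ^ 2 ≠ 0 := pow_ne_zero 2 (by exact_mod_cast hp.ne_zero)
    apply mul_left_cancel₀ this; push_cast at hxy; linear_combination hxy⟩
  have hlt : m < p ^ 2 * m :=
    lt_mul_left (Nat.pos_of_ne_zero hm0) (Nat.one_lt_pow two_ne_zero hp.one_lt)
  rw [Nat.factorization_mul (pow_ne_zero 2 hp.ne_zero) hm0, Finsupp.add_apply,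
    hp.factorization_pow, Finsupp.single_eq_same]
  exact even_two.add (ih m hlt hm)

theorem natCast_mem_sqAddTwoSq_iff (n : ℕ) :
    (n : ℤ) ∈ sqAddTwoSq ↔
      ∀ p : ℕ, p.Prime → ¬IsSquare (-2 : ZMod p) → Even (n.factorization p) := by
  refine ⟨fun hn p hp h => even_factorization_of_mem_sqAddTwoSq hp h hn, fun h => ?_⟩
  rcases eq_or_ne n 0 with rfl | hn
  · exact ⟨0, 0, by simp⟩
  rw [← Nat.prod_factorization_pow_eq_self hn, Nat.cast_finsuppProd]
  refine Submonoid.prod_mem _ fun p hp => ?_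
  have hp : p.Prime := Nat.prime_of_mem_primeFactors hp
  dsimp only
  push_cast
  by_cases hsq : IsSquare (-2 : ZMod p)
  · exact pow_mem (hp.mem_sqAddTwoSq hsq) _
  · obtain ⟨k, hk⟩ := (h p hp hsq).two_dvd
    rw [hk, pow_mul']
    exact sq_mem_sqAddTwoSq _

theorem finite_setOf_sq_add_two_mul_sq_eq (n : ℤ) :
    {q : ℤ × ℤ | q.1 ^ 2 + 2 * q.2 ^ 2 = n}.Finite := by
  refine ((Set.finite_Icc (-n) n).prod (Set.finite_Icc (-n) n)).subset ?_
  rintro ⟨x, y⟩ (hxy : x ^ 2 + 2 * y ^ 2 = n)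
  simp only [Set.mem_prod, Set.mem_Icc]
  refine ⟨⟨?_, ?_⟩, ?_, ?_⟩ <;> nlinarith [sq_nonneg (x - 1), sq_nonneg (x + 1),
    sq_nonneg (y - 1), sq_nonneg (y + 1)]

theorem stmt_15_general (n : ℕ) :
    (({p : ℤ × ℤ | p.1 ^ 2 + 2 * p.2 ^ 2 = (n : ℤ)}.ncard ≠ 0 ↔
        ∀ p : ℕ, p.Prime → (p % 8 = 5 ∨ p % 8 = 7) → Even (n.factorization p)) ∧
      (0 < 2 * ∑ d ∈ n.divisors, chiNeg2 d ↔
        ∑ d ∈ n.divisors, chiNeg2 d ≠ 0)) := by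
  refine ⟨?_, ?_⟩
  · have hrep : {p : ℤ × ℤ | p.1 ^ 2 + 2 * p.2 ^ 2 = (n : ℤ)}.Nonempty ↔ (n : ℤ) ∈ sqAddTwoSq :=
      ⟨fun ⟨q, hq⟩ => ⟨q.1, q.2, hq⟩, fun ⟨x, y, hxy⟩ => ⟨(x, y), hxy⟩⟩
    rw [← Nat.pos_iff_ne_zero, Set.ncard_pos (finite_setOf_sq_add_two_mul_sq_eq n), hrep,
      natCast_mem_sqAddTwoSq_iff]
    refine forall₂_congr fun p hp => ?_
    rw [ZMod.isSquare_neg_two_iff_of_prime hp, not_not]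
  · have := sum_divisors_chiNeg2_nonneg n
    omega

/-- Representability criterion for `x² + 2y²`: a positive integer `n` is
represented by `x² + 2y²` if and only if every prime `p ≡ 5, 7 (mod 8)` occurs
to an even power in `n`; equivalently, `2∑_{d∣n}(−2/d) > 0` iff
`∑_{d∣n}(−2/d) ≠ 0`. -/
theorem stmt_15 (n : ℕ) (hn : 0 < n) :
    (({p : ℤ × ℤ | p.1 ^ 2 + 2 * p.2 ^ 2 = (n : ℤ)}.ncard ≠ 0 ↔
        ∀ p : ℕ, p.Prime → (p % 8 = 5 ∨ p % 8 = 7) → Even (n.factorization p)) ∧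
      (0 < 2 * ∑ d ∈ n.divisors, chiNeg2 d ↔
        ∑ d ∈ n.divisors, chiNeg2 d ≠ 0)) :=
  stmt_15_general n
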